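/- arXiv:1904.12747 — 4 statements merged into one kernel-verified Lean document; each statement's English description precedes it below -/
import Mathlib

section
/- Suppose g : F_2^D → F_2 satisfies Pr_{x,y uniform in F_2^D}[g(0) ⊕ g(x) ⊕ g(y) ⊕ g(x ⊕ y) = 0] ≥ 1 − ε. Then there exists an affine function h : F_2^D → F_2 with Pr_{x uniform}[g(x) = h(x)] ≥ 1 − ε. -/
open Finset

noncomputable def blrE (a : ZMod 2) : ℝ := if a = 0 then 1 else -1

lemma zmod2_cases : ∀ a : ZMod 2, a = 0 ∨ a = 1 := by decide

lemma blrE_add (a b : ZMod 2) : blrE (a + b) = blrE a * blrE b := by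
  rcases zmod2_cases a with ha | ha <;> rcases zmod2_cases b with hb | hb <;>
    subst ha <;> subst hb <;> simp [blrE, (by decide : (1 + 1 : ZMod 2) = 0)]

lemma blrE_sq (a : ZMod 2) : blrE a * blrE a = 1 := by
  rcases zmod2_cases a with ha | ha <;> subst ha <;> norm_num [blrE]

lemma blrE_sum {ι : Type*} (S : Finset ι) (w : ι → ZMod 2) :
    blrE (∑ i ∈ S, w i) = ∏ i ∈ S, blrE (w i) := by
  induction S using Finset.cons_induction with
  | empty => simp [blrE]
  | cons a s ha ih => rw [Finset.sum_cons, Finset.prod_cons, blrE_add, ih]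

lemma sum_chi {D : ℕ} (w : Fin D → ZMod 2) :
    ∑ S : Finset (Fin D), blrE (∑ i ∈ S, w i) = if w = 0 then (2:ℝ)^D else 0 := by
  have key : ∑ S : Finset (Fin D), blrE (∑ i ∈ S, w i)
      = ∏ i : Fin D, (blrE (w i) + 1) := by
    rw [Finset.prod_add]
    simp only [Finset.prod_const_one, mul_one]
    rw [← Finset.powerset_univ]
    exact Finset.sum_congr rfl fun S _ => blrE_sum S w
  rw [key]
  by_cases hw : w = 0
  · subst hw
    rw [if_pos rfl]
    simp [blrE]
    norm_num
  · rw [if_neg hw]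
    obtain ⟨i, hi⟩ := Function.ne_iff.mp hw
    apply Finset.prod_eq_zero (Finset.mem_univ i)
    rcases zmod2_cases (w i) with h1 | h1
    · exact absurd h1 hi
    · rw [h1]; norm_num [blrE]

lemma fun_add_eq_zero_iff {D : ℕ} (x z : Fin D → ZMod 2) :
    x + z = 0 ↔ z = x := by
  constructor <;> intro h
  · funext i
    exact (by decide : ∀ a c : ZMod 2, a + c = 0 → c = a) _ _ (congrFun h i)
  · rw [h]; funext i
    exact (by decide : ∀ a : ZMod 2, a + a = 0) (x i)

lemma blr_parseval {D : ℕ} (F : (Fin D → ZMod 2) → ℝ) (hF : ∀ x, F x * F x = 1) :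
    ∑ S : Finset (Fin D), (∑ x, F x * blrE (∑ i ∈ S, x i))^2 = (2:ℝ)^D * (2:ℝ)^D := by
  have step1 : ∀ S : Finset (Fin D), (∑ x, F x * blrE (∑ i ∈ S, x i))^2
      = ∑ x, ∑ y, F x * F y * blrE (∑ i ∈ S, (x + y) i) := by
    intro S
    rw [sq, Finset.sum_mul_sum]
    refine Finset.sum_congr rfl fun x _ => Finset.sum_congr rfl fun y _ => ?_
    have : (∑ i ∈ S, (x + y) i) = (∑ i ∈ S, x i) + ∑ i ∈ S, y i := by
      simp only [Pi.add_apply]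
      rw [← Finset.sum_add_distrib]
    rw [this, blrE_add]; ring
  simp only [step1]
  rw [Finset.sum_comm]
  have swap2 : ∀ x : Fin D → ZMod 2,
      ∑ S : Finset (Fin D), ∑ y, F x * F y * blrE (∑ i ∈ S, (x + y) i)
      = ∑ y, F x * F y * (if x + y = 0 then (2:ℝ)^D else 0) := by
    intro x
    rw [Finset.sum_comm]
    refine Finset.sum_congr rfl fun y _ => ?_
    rw [← Finset.mul_sum, sum_chi]
  simp only [swap2]
  have inner : ∀ x : Fin D → ZMod 2,
      ∑ y, F x * F y * (if x + y = 0 then (2:ℝ)^D else 0) = (2:ℝ)^D := by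
    intro x
    have : ∀ y, F x * F y * (if x + y = 0 then (2:ℝ)^D else 0)
        = if y = x then F x * F y * (2:ℝ)^D else 0 := by
      intro y
      by_cases hxy : x + y = 0
      · rw [if_pos hxy, if_pos ((fun_add_eq_zero_iff x y).mp hxy)]
      · rw [if_neg hxy, if_neg (fun hh => hxy ((fun_add_eq_zero_iff x y).mpr hh))]
        ring
    simp only [this]
    rw [Finset.sum_ite_eq' Finset.univ x (fun y => F x * F y * (2:ℝ)^D)]
    simp [hF x]
  simp only [inner]
  rw [Finset.sum_const, Finset.card_univ, Fintype.card_fun]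
  simp [ZMod.card]


lemma blr_cube {D : ℕ} (F : (Fin D → ZMod 2) → ℝ) :
    ∑ S : Finset (Fin D), (∑ x, F x * blrE (∑ i ∈ S, x i))^3
      = (2:ℝ)^D * ∑ x, ∑ y, F x * F y * F (x + y) := by
  have step1 : ∀ S : Finset (Fin D), (∑ x, F x * blrE (∑ i ∈ S, x i))^3
      = ∑ x, ∑ y, ∑ z, F x * F y * F z * blrE (∑ i ∈ S, (x + y + z) i) := by
    intro S
    rw [pow_succ, sq, Finset.sum_mul_sum, Finset.sum_mul]
    refine Finset.sum_congr rfl fun x _ => ?_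
    rw [Finset.sum_mul]
    refine Finset.sum_congr rfl fun y _ => ?_
    rw [Finset.mul_sum]
    refine Finset.sum_congr rfl fun z _ => ?_
    have : (∑ i ∈ S, (x + y + z) i) = ((∑ i ∈ S, x i) + ∑ i ∈ S, y i) + ∑ i ∈ S, z i := by
      simp only [Pi.add_apply]
      rw [← Finset.sum_add_distrib, ← Finset.sum_add_distrib]
    rw [this, blrE_add, blrE_add]
    ring
  have key : ∀ x : Fin D → ZMod 2,
      ∑ S : Finset (Fin D), ∑ y, ∑ z, F x * F y * F z * blrE (∑ i ∈ S, (x + y + z) i)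
        = ∑ y, F x * F y * F (x + y) * (2:ℝ)^D := by
    intro x
    rw [Finset.sum_comm]
    refine Finset.sum_congr rfl fun y _ => ?_
    rw [Finset.sum_comm]
    have hz : ∀ z, (∑ S : Finset (Fin D), F x * F y * F z * blrE (∑ i ∈ S, (x + y + z) i))
        = if z = x + y then F x * F y * F z * (2:ℝ)^D else 0 := by
      intro z
      rw [← Finset.mul_sum, sum_chi]
      by_cases hzz : x + y + z = 0
      · rw [if_pos hzz, if_pos ((fun_add_eq_zero_iff (x + y) z).mp hzz)]
      · rw [if_neg hzz, if_neg (fun hh => hzz ((fun_add_eq_zero_iff (x + y) z).mpr hh))]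
        ring
    rw [Finset.sum_congr rfl fun z _ => hz z,
      Finset.sum_ite_eq' Finset.univ (x + y) (fun z => F x * F y * F z * (2:ℝ)^D)]
    simp
  simp only [step1]
  rw [Finset.sum_comm, Finset.sum_congr rfl fun x _ => key x, Finset.mul_sum]
  refine Finset.sum_congr rfl fun x _ => ?_
  rw [Finset.mul_sum]
  exact Finset.sum_congr rfl fun y _ => by ring

/-- the BLR affinity test. If
`Pr_{x,y}[g 0 ⊕ g x ⊕ g y ⊕ g (x ⊕ y) = 0] ≥ 1 - ε` (for independent uniform
`x, y` in `𝔽₂^D`), then `g` agrees with some affine function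
`x ↦ c ⊕ ⨁_{i ∈ S} x i` on at least a `1 - ε` fraction of points. -/
theorem blr_affinity_test (D : ℕ) (g : (Fin D → ZMod 2) → ZMod 2) (ε : ℝ)
    (h : ((Finset.univ.filter (fun p : (Fin D → ZMod 2) × (Fin D → ZMod 2) =>
            g 0 + g p.1 + g p.2 + g (p.1 + p.2) = 0)).card : ℝ)
          / (Fintype.card ((Fin D → ZMod 2) × (Fin D → ZMod 2)) : ℝ)
        ≥ 1 - ε) :
    ∃ (c : ZMod 2) (S : Finset (Fin D)),
      ((Finset.univ.filter (fun x : Fin D → ZMod 2 =>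
            g x = c + ∑ i ∈ S, x i)).card : ℝ)
          / (Fintype.card (Fin D → ZMod 2) : ℝ)
        ≥ 1 - ε := by
  classical
  set F : (Fin D → ZMod 2) → ℝ := fun x => blrE (g 0 + g x) with hFdef
  have hFsq : ∀ x, F x * F x = 1 := fun x => blrE_sq _
  have hcardV : (Fintype.card (Fin D → ZMod 2) : ℝ) = 2^D := by
    rw [Fintype.card_fun, ZMod.card, Fintype.card_fin]
    push_cast
    ring
  have hcardP : (Fintype.card ((Fin D → ZMod 2) × (Fin D → ZMod 2)) : ℝ)
      = 2^D * 2^D := by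
    rw [Fintype.card_prod]
    push_cast
    rw [hcardV]
  have h2pos : (0:ℝ) < 2^D := by positivity
  -- pointwise value of the test
  have hptw : ∀ x y : Fin D → ZMod 2, F x * F y * F (x + y)
      = if g 0 + g x + g y + g (x + y) = 0 then (1:ℝ) else -1 := by
    intro x y
    have e1 : F x * F y * F (x + y)
        = blrE ((g 0 + g x) + (g 0 + g y) + (g 0 + g (x + y))) := by
      rw [blrE_add, blrE_add]
    have e2 : (g 0 + g x) + (g 0 + g y) + (g 0 + g (x + y))
        = g 0 + g x + g y + g (x + y) :=
      (by decide : ∀ a b c d : ZMod 2, (a + b) + (a + c) + (a + d) = a + b + c + d) _ _ _ _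
    rw [e1, e2]
    rfl
  -- the counting identity for T
  have hsumIte : ∀ (α : Type) [Fintype α] (p : α → Prop) [DecidablePred p],
      ∑ a : α, (if p a then (1:ℝ) else -1)
        = 2 * ((Finset.univ.filter p).card : ℝ) - (Fintype.card α : ℝ) := by
    intro α _ p _
    have : ∀ a : α, (if p a then (1:ℝ) else -1)
        = 2 * (if p a then (1:ℝ) else 0) - 1 := by
      intro a; split_ifs <;> norm_num
    rw [Finset.sum_congr rfl fun a _ => this a, Finset.sum_sub_distrib,
      ← Finset.mul_sum, Finset.sum_boole, Finset.sum_const, Finset.card_univ]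
    simp
  have hT : ∑ x, ∑ y, F x * F y * F (x + y)
      = 2 * ((Finset.univ.filter (fun p : (Fin D → ZMod 2) × (Fin D → ZMod 2) =>
            g 0 + g p.1 + g p.2 + g (p.1 + p.2) = 0)).card : ℝ) - 2^D * 2^D := by
    have e1 : ∑ x, ∑ y, F x * F y * F (x + y)
        = ∑ p : (Fin D → ZMod 2) × (Fin D → ZMod 2),
            (if g 0 + g p.1 + g p.2 + g (p.1 + p.2) = 0 then (1:ℝ) else -1) := by
      rw [Fintype.sum_prod_type]
      exact Finset.sum_congr rfl fun x _ => Finset.sum_congr rfl fun y _ => hptw x y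
    rw [e1, hsumIte _ _, hcardP]
  -- lower bound on the number of passing pairs
  have hP : ((Finset.univ.filter (fun p : (Fin D → ZMod 2) × (Fin D → ZMod 2) =>
        g 0 + g p.1 + g p.2 + g (p.1 + p.2) = 0)).card : ℝ)
      ≥ (1 - ε) * (2^D * 2^D) := by
    rw [hcardP] at h
    exact (le_div_iff₀ (by positivity)).mp h
  have hTlb : ∑ x, ∑ y, F x * F y * F (x + y) ≥ (1 - 2*ε) * (2^D * 2^D) := by
    rw [hT]; nlinarith [hP]
  -- choose maximizing S₀
  obtain ⟨S₀, _, hS₀⟩ := Finset.exists_max_image (Finset.univ : Finset (Finset (Fin D)))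
    (fun S => ∑ x, F x * blrE (∑ i ∈ S, x i)) ⟨∅, Finset.mem_univ ∅⟩
  have hcube := blr_cube F
  have hpars := blr_parseval F hFsq
  have hbound : ∑ S : Finset (Fin D), (∑ x, F x * blrE (∑ i ∈ S, x i))^3
      ≤ (∑ x, F x * blrE (∑ i ∈ S₀, x i)) * ∑ S : Finset (Fin D),
          (∑ x, F x * blrE (∑ i ∈ S, x i))^2 := by
    rw [Finset.mul_sum]
    refine Finset.sum_le_sum fun S _ => ?_
    have hle := hS₀ S (Finset.mem_univ S)
    calc (∑ x, F x * blrE (∑ i ∈ S, x i))^3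
        = (∑ x, F x * blrE (∑ i ∈ S, x i)) * (∑ x, F x * blrE (∑ i ∈ S, x i))^2 := by ring
      _ ≤ (∑ x, F x * blrE (∑ i ∈ S₀, x i)) * (∑ x, F x * blrE (∑ i ∈ S, x i))^2 :=
          mul_le_mul_of_nonneg_right hle (sq_nonneg _)
  rw [hcube, hpars] at hbound
  have hA0 : (∑ x, F x * blrE (∑ i ∈ S₀, x i)) ≥ (1 - 2*ε) * 2^D := by
    have h1 : (1 - 2*ε) * 2^D * (2^D * 2^D)
        ≤ (∑ x, F x * blrE (∑ i ∈ S₀, x i)) * (2^D * 2^D) := by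
      nlinarith [hTlb, hbound, h2pos]
    exact (mul_le_mul_iff_of_pos_right (by positivity)).mp h1
  -- agreement count
  have hx : ∀ x : Fin D → ZMod 2, F x * blrE (∑ i ∈ S₀, x i)
      = if g x = g 0 + ∑ i ∈ S₀, x i then (1:ℝ) else -1 := by
    intro x
    have e1 : F x * blrE (∑ i ∈ S₀, x i) = blrE ((g 0 + g x) + ∑ i ∈ S₀, x i) := by
      rw [blrE_add]
    have hiff : ((g 0 + g x) + ∑ i ∈ S₀, x i = 0) ↔ (g x = g 0 + ∑ i ∈ S₀, x i) :=
      (by decide : ∀ a b s : ZMod 2, ((a + b) + s = 0 ↔ b = a + s)) _ _ _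
    rw [e1]
    by_cases hc : g x = g 0 + ∑ i ∈ S₀, x i
    · rw [if_pos hc, blrE, if_pos (hiff.mpr hc)]
    · rw [if_neg hc, blrE, if_neg (fun h0 => hc (hiff.mp h0))]
  have hAc : (∑ x, F x * blrE (∑ i ∈ S₀, x i))
      = 2 * ((Finset.univ.filter (fun x : Fin D → ZMod 2 =>
          g x = g 0 + ∑ i ∈ S₀, x i)).card : ℝ) - 2^D := by
    rw [Finset.sum_congr rfl fun x _ => hx x, hsumIte _ _, hcardV]
  refine ⟨g 0, S₀, ?_⟩
  rw [ge_iff_le, le_div_iff₀ (by rw [hcardV]; positivity), hcardV]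
  nlinarith [hA0, hAc]
end

section
/- Let G be the weighted graph on vertex set V_1 ⊔ ... ⊔ V_d with |V_i| = n_i (the 1-skeleton of the complete d-partite complex), where the random-walk transition probability from a vertex in V_i to a given vertex in V_j (j ≠ i) is 1/((d−1)n_j). Then the transition matrix A has eigenvalue 1 with multiplicity 1, eigenvalue 0 with multiplicity (∑_i n_i) − d, and eigenvalue −1/(d−1) with multiplicity d − 1. -/
open Polynomial Matrix

/-- The random-walk transition matrix of the 1-skeleton of the complete
`d`-partite complex with parts `V_i` of size `n i`: zero diagonal blocks, and
off-diagonal `(i,j)`-block equal to `1/((d-1) n_j)` times the all-ones matrix. -/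
noncomputable def multipartiteWalk (d : ℕ) (n : Fin d → ℕ) :
    Matrix ((i : Fin d) × Fin (n i)) ((i : Fin d) × Fin (n i)) ℝ :=
  fun v w => if v.1 = w.1 then 0 else 1 / (((d : ℝ) - 1) * (n w.1))

lemma charpoly_eval' {m : Type*} [Fintype m] [DecidableEq m] (M : Matrix m m ℝ) (x : ℝ) :
    M.charpoly.eval x = (x • (1 : Matrix m m ℝ) - M).det := by
  rw [Matrix.charpoly, ← Polynomial.coe_evalRingHom, RingHom.map_det]
  congr 1
  ext i j
  by_cases h : i = j
  · subst h; simp [Matrix.charmatrix_apply_eq, Matrix.one_apply]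
  · simp [Matrix.charmatrix_apply_ne _ _ _ h, Matrix.one_apply, h]

lemma det_block_aux (k : ℕ) (x c : ℝ) (hx : x ≠ 0) :
    (x • (1 : Matrix (Fin k) (Fin k) ℝ) + Matrix.of (fun _ _ => c)).det
      = x ^ k * (1 + x⁻¹ * (k * c)) := by
  have h1 : (Matrix.of (fun _ _ : Fin k => c))
      = replicateCol Unit (fun _ => (1:ℝ)) * replicateRow Unit (fun _ => c) := by
    ext i j; simp [Matrix.mul_apply]
  have hdet : IsUnit (x • (1 : Matrix (Fin k) (Fin k) ℝ)).det := by
    simp [Matrix.det_smul, hx, isUnit_iff_ne_zero, pow_ne_zero]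
  have hinv : (x • (1 : Matrix (Fin k) (Fin k) ℝ))⁻¹ = x⁻¹ • 1 := by
    apply Matrix.inv_eq_right_inv
    rw [Matrix.smul_mul, Matrix.mul_smul, Matrix.one_mul, smul_smul]
    simp [hx]
  rw [h1, Matrix.det_add_replicateCol_mul_replicateRow hdet, hinv]
  rw [Matrix.det_smul, Matrix.det_one, Matrix.det_unique]
  congr 1
  · simp
  · simp [Matrix.mul_apply, Finset.mul_sum, mul_comm]

lemma det_blockDiagonal'_fin {d : ℕ} {n : Fin d → ℕ}
    (B : ∀ i, Matrix (Fin (n i)) (Fin (n i)) ℝ) :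
    (Matrix.blockDiagonal' B).det = ∏ i, (B i).det := by
  rw [(Matrix.blockTriangular_blockDiagonal' B).det_fintype]
  refine Finset.prod_congr rfl fun a _ => ?_
  let e : Fin (n a) ≃ {v : (i : Fin d) × Fin (n i) // v.1 = a} :=
    { toFun := fun b => ⟨⟨a, b⟩, rfl⟩
      invFun := fun v => Fin.cast (congrArg n v.2) v.1.2
      left_inv := fun b => rfl
      right_inv := by rintro ⟨⟨i, b⟩, rfl⟩; rfl }
  rw [← Matrix.det_submatrix_equiv_self e]
  congr 1
  ext b c
  simp [e, Matrix.toSquareBlock_def, Matrix.blockDiagonal'_apply_eq]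

lemma main_eval (d : ℕ) (hd : 2 ≤ d) (n : Fin d → ℕ) (hn : ∀ i, 0 < n i)
    (x : ℝ) (hx : 0 < x) :
    ((multipartiteWalk d n).charpoly).eval x
      = (x - 1) * x ^ ((∑ i : Fin d, n i) - d)
          * (x + 1 / ((d : ℝ) - 1)) ^ (d - 1) := by
  set γ : ℝ := 1 / ((d : ℝ) - 1) with hγdef
  have hd1 : (1:ℝ) ≤ (d:ℝ) - 1 := by
    have : (2:ℝ) ≤ d := by exact_mod_cast hd
    linarith
  have hdne : ((d:ℝ) - 1) ≠ 0 := by linarith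
  have hγ : 0 < γ := by positivity
  have hxγ : x + γ ≠ 0 := by positivity
  have hxne : x ≠ 0 := ne_of_gt hx
  set B : ∀ i : Fin d, Matrix (Fin (n i)) (Fin (n i)) ℝ :=
    fun i => x • 1 + Matrix.of (fun _ _ => γ / (n i)) with hB
  set c : ((i : Fin d) × Fin (n i)) → ℝ := fun w => -(γ / (n w.1)) with hc
  have hnne : ∀ i : Fin d, ((n i : ℝ)) ≠ 0 := fun i => by
    exact_mod_cast (hn i).ne'
  -- decomposition
  have hdecomp : x • (1 : Matrix ((i : Fin d) × Fin (n i)) ((i : Fin d) × Fin (n i)) ℝ)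
      - multipartiteWalk d n
      = Matrix.blockDiagonal' B + replicateCol Unit (fun _ => (1:ℝ)) * replicateRow Unit c := by
    ext ⟨i, a⟩ ⟨j, b⟩
    by_cases h : i = j
    · subst h
      simp only [Matrix.add_apply, Matrix.smul_apply, Matrix.sub_apply,
        Matrix.blockDiagonal'_apply_eq, multipartiteWalk, Matrix.mul_apply,
        Matrix.replicateCol_apply, Matrix.replicateRow_apply, hB, hc, Matrix.of_apply,
        Matrix.one_apply, Finset.sum_const, Finset.card_univ]
      by_cases hab : a = b
      · subst hab
        simp [Sigma.mk.inj_iff, smul_eq_mul]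
      · have : (⟨i, a⟩ : (i : Fin d) × Fin (n i)) ≠ ⟨i, b⟩ := by
          simp [Sigma.mk.inj_iff, hab]
        simp [this, hab, smul_eq_mul]
    · have hne : (⟨i, a⟩ : (i : Fin d) × Fin (n i)) ≠ ⟨j, b⟩ := by
        simp [Sigma.mk.inj_iff, h]
      simp only [Matrix.add_apply, Matrix.smul_apply, Matrix.sub_apply,
        Matrix.blockDiagonal'_apply_ne _ _ _ h, multipartiteWalk,
        Matrix.mul_apply, Matrix.replicateCol_apply, Matrix.replicateRow_apply, hc,
        Matrix.one_apply, Finset.sum_const, Finset.card_univ]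
      simp [hne, h, hγdef, div_div, smul_eq_mul]
      ring
  -- determinant of the block diagonal part
  have hDdet : (Matrix.blockDiagonal' B).det
      = x ^ (∑ i : Fin d, n i) * (1 + x⁻¹ * γ) ^ d := by
    rw [det_blockDiagonal'_fin]
    have : ∀ i : Fin d, (B i).det = x ^ (n i) * (1 + x⁻¹ * γ) := by
      intro i
      rw [hB, det_block_aux _ _ _ hxne, mul_div_cancel₀ _ (hnne i)]
    rw [Finset.prod_congr rfl (fun i _ => this i), Finset.prod_mul_distrib,
      Finset.prod_const, Finset.prod_pow_eq_pow_sum, Finset.card_univ,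
      Fintype.card_fin]
  have h1γ : (0:ℝ) < 1 + x⁻¹ * γ := by positivity
  have hDunit : IsUnit (Matrix.blockDiagonal' B).det := by
    rw [hDdet]
    exact (isUnit_iff_ne_zero).2 (by positivity)
  -- inverse action on the all-ones vector
  have hsolve : Matrix.blockDiagonal' B * ((x + γ)⁻¹ • replicateCol Unit (fun _ : (i : Fin d) × Fin (n i) => (1:ℝ)) : Matrix ((i : Fin d) × Fin (n i)) Unit ℝ)
      = replicateCol Unit (fun _ : (i : Fin d) × Fin (n i) => (1:ℝ)) := by
    ext ⟨i, a⟩ u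
    rw [Matrix.mul_apply]
    have hsum : ∑ w : (i : Fin d) × Fin (n i),
        Matrix.blockDiagonal' B ⟨i, a⟩ w * ((x + γ)⁻¹ • replicateCol Unit (fun _ : (i : Fin d) × Fin (n i) => (1:ℝ))) w u
        = (x + γ)⁻¹ * ∑ w : (i : Fin d) × Fin (n i), Matrix.blockDiagonal' B ⟨i, a⟩ w := by
      rw [Finset.mul_sum]
      refine Finset.sum_congr rfl fun w _ => ?_
      simp [mul_comm]
    rw [hsum]
    have hsum2 : ∑ w : (i : Fin d) × Fin (n i), Matrix.blockDiagonal' B ⟨i, a⟩ w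
        = x + γ := by
      rw [← Finset.univ_sigma_univ, Finset.sum_sigma]
      rw [Finset.sum_eq_single i]
      · have hb : ∀ b : Fin (n i), Matrix.blockDiagonal' B ⟨i, a⟩ ⟨i, b⟩
            = (if a = b then x else 0) + γ / (n i) := by
          intro b
          simp [hB, Matrix.blockDiagonal'_apply_eq, Matrix.one_apply,
            mul_ite, mul_one, mul_zero, smul_eq_mul]
        rw [Finset.sum_congr rfl (fun b _ => hb b), Finset.sum_add_distrib,
          Finset.sum_ite_eq, Finset.sum_const, Finset.card_univ,
          Fintype.card_fin, nsmul_eq_mul, mul_div_cancel₀ _ (hnne i)]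
        simp
      · intro j _ hj
        apply Finset.sum_eq_zero
        intro b _
        exact Matrix.blockDiagonal'_apply_ne B a b (fun hh => hj hh.symm) -- check direction
      · intro hi; exact absurd (Finset.mem_univ i) hi
    rw [hsum2, inv_mul_cancel₀ hxγ]
    simp
  have hinv1 : ((Matrix.blockDiagonal' B)⁻¹ : Matrix ((i : Fin d) × Fin (n i)) ((i : Fin d) × Fin (n i)) ℝ) * replicateCol Unit (fun _ : (i : Fin d) × Fin (n i) => (1:ℝ))
      = (x + γ)⁻¹ • replicateCol Unit (fun _ : (i : Fin d) × Fin (n i) => (1:ℝ)) := by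
    conv_lhs => rw [← hsolve]
    rw [Matrix.nonsing_inv_mul_cancel_left _ _ hDunit]
  -- the rank-one update determinant
  have hrank1 : ((1 : Matrix Unit Unit ℝ) + replicateRow Unit c * ((Matrix.blockDiagonal' B)⁻¹ : Matrix ((i : Fin d) × Fin (n i)) ((i : Fin d) × Fin (n i)) ℝ) * replicateCol Unit (fun _ : (i : Fin d) × Fin (n i) => (1:ℝ))).det
      = 1 + (x + γ)⁻¹ * (-(d * γ)) := by
    rw [Matrix.mul_assoc, hinv1, Matrix.mul_smul, Matrix.det_unique]
    simp only [Matrix.add_apply, Matrix.smul_apply, Matrix.one_apply_eq,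
      smul_eq_mul, Matrix.mul_apply, Matrix.replicateRow_apply, Matrix.replicateCol_apply, mul_one]
    congr 1
    congr 1
    rw [hc, ← Finset.univ_sigma_univ, Finset.sum_sigma]
    have hsum3 : ∀ i : Fin d, ∑ _a : Fin (n i), -(γ / (n i : ℝ)) = -γ := by
      intro i
      have h4 : (n i : ℝ) * (γ / n i) = γ := by rw [mul_comm, div_mul_cancel₀ _ (hnne i)]
      rw [Finset.sum_const, Finset.card_univ, Fintype.card_fin, nsmul_eq_mul,
        mul_neg, h4]
    rw [Finset.sum_congr rfl (fun i _ => hsum3 i), Finset.sum_const,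
      Finset.card_univ, Fintype.card_fin, nsmul_eq_mul]
    ring
  -- putting it all together
  rw [charpoly_eval', hdecomp, Matrix.det_add_replicateCol_mul_replicateRow hDunit, hrank1, hDdet]
  -- now pure real algebra
  have hNd : d ≤ ∑ i : Fin d, n i := by
    calc d = ∑ _i : Fin d, 1 := by simp
    _ ≤ ∑ i : Fin d, n i := Finset.sum_le_sum (fun i _ => hn i)
  have hxpow : x ^ (∑ i : Fin d, n i) = x ^ ((∑ i : Fin d, n i) - d) * x ^ d := by
    rw [← pow_add, Nat.sub_add_cancel hNd]
  rw [hxpow]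
  have hxd : x ^ d * (1 + x⁻¹ * γ) ^ d = (x + γ) ^ d := by
    rw [← mul_pow]
    congr 1
    field_simp
  have hdpow : (x + γ) ^ d = (x + γ) ^ (d - 1) * (x + γ) := by
    rw [← pow_succ, Nat.sub_add_cancel (by omega : 1 ≤ d)]
  have hfin : (x + γ) * (1 + (x + γ)⁻¹ * (-(d * γ))) = x - 1 := by
    rw [mul_add, mul_one, ← mul_assoc, mul_inv_cancel₀ hxγ, one_mul]
    have h5 : (d:ℝ) * γ = 1 + γ := by
      rw [hγdef, mul_one_div]
      field_simp
      ring
    rw [h5]; ring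
  calc x ^ ((∑ i : Fin d, n i) - d) * x ^ d * (1 + x⁻¹ * γ) ^ d
        * (1 + (x + γ)⁻¹ * (-(d * γ)))
      = x ^ ((∑ i : Fin d, n i) - d) * ((x + γ) ^ (d-1) *
          ((x + γ) * (1 + (x + γ)⁻¹ * (-(d * γ))))) := by
        rw [mul_assoc (x ^ ((∑ i : Fin d, n i) - d)), hxd, hdpow]; ring
    _ = (x - 1) * x ^ ((∑ i : Fin d, n i) - d) * (x + γ) ^ (d - 1) := by
        rw [hfin]; ring


/-- the transition matrix has eigenvalue `1` with multiplicity 1,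
eigenvalue `0` with multiplicity `(∑ i, n i) - d`, and eigenvalue `-1/(d-1)`
with multiplicity `d - 1` (stated via its characteristic polynomial). -/
theorem multipartiteWalk_charpoly (d : ℕ) (hd : 2 ≤ d) (n : Fin d → ℕ)
    (hn : ∀ i, 0 < n i) :
    (multipartiteWalk d n).charpoly
      = (X - C 1) * X ^ ((∑ i : Fin d, n i) - d)
          * (X + C (1 / ((d : ℝ) - 1))) ^ (d - 1) := by
  refine Polynomial.eq_of_infinite_eval_eq _ _
    (Set.Infinite.mono ?_ (Set.Ioi_infinite (0:ℝ)))
  intro x hx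
  have hx' : 0 < x := hx
  show Polynomial.eval x _ = Polynomial.eval x _
  rw [main_eval d hd n hn x hx']
  simp [Polynomial.eval_mul, Polynomial.eval_pow]
end

section
/- Except for a single eigenvalue equal to 1, all eigenvalues of the normalized adjacency (random walk) matrix of the complete multipartite graph with parts of sizes n_1,...,n_d (d ≥ 2, edge distribution induced by choosing one uniform vertex per part and then a uniform pair) are non-positive. -/
lemma sum_ite_zero' {d : ℕ} (s : Fin d → ℝ) (i : Fin d) :
    ∑ j, (if i = j then 0 else s j) = (∑ j, s j) - s i := by
  have h1 : ∑ j, (if i = j then 0 else s j)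
      = ∑ j, (s j - if i = j then s j else 0) :=
    Finset.sum_congr rfl fun j _ => by split_ifs <;> ring
  rw [h1, Finset.sum_sub_distrib, Finset.sum_ite_eq]
  simp

lemma mulVec_formula (d : ℕ) (n : Fin d → ℕ) (v : ((i : Fin d) × Fin (n i)) → ℝ)
    (x : (i : Fin d) × Fin (n i)) :
    (multipartiteWalk d n).mulVec v x =
      ∑ j, if x.1 = j then 0 else (∑ b, v ⟨j, b⟩) / (((d : ℝ) - 1) * n j) := by
  rw [Matrix.mulVec, dotProduct, ← Finset.univ_sigma_univ, Finset.sum_sigma]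
  refine Finset.sum_congr rfl fun j _ => ?_
  by_cases h : x.1 = j
  · simp [multipartiteWalk, h]
  · simp only [multipartiteWalk, if_neg h]
    rw [Finset.sum_div]
    refine Finset.sum_congr rfl fun b _ => ?_
    ring

lemma key_lemma (d : ℕ) (hd : 2 ≤ d) (n : Fin d → ℕ) (hn : ∀ i, 0 < n i)
    (μ : ℝ) (hμ : μ ≠ 0) (v : ((i : Fin d) × Fin (n i)) → ℝ)
    (hv : (multipartiteWalk d n).mulVec v = μ • v) :
    ∃ c : Fin d → ℝ, (∀ x, v x = c x.1) ∧
      ∀ i, c i * (μ * ((d : ℝ) - 1) + 1) = ∑ j, c j := by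
  have hd1 : (1 : ℝ) ≤ (d : ℝ) - 1 := by
    have : (2 : ℝ) ≤ (d : ℝ) := by exact_mod_cast hd
    linarith
  have hdne : ((d : ℝ) - 1) ≠ 0 := by linarith
  set s : Fin d → ℝ := fun j => (∑ b, v ⟨j, b⟩) / (((d : ℝ) - 1) * n j) with hs_def
  have hvx : ∀ x, μ * v x = (∑ j, s j) - s x.1 := by
    intro x
    have h1 : (multipartiteWalk d n).mulVec v x = μ * v x := by
      rw [hv]; rfl
    rw [← h1, mulVec_formula, sum_ite_zero']
  set c : Fin d → ℝ := fun i => ((∑ j, s j) - s i) / μ with hc_def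
  have hvc : ∀ x, v x = c x.1 := by
    intro x
    rw [hc_def]
    field_simp
    linarith [hvx x]
  have hsc : ∀ i, s i = c i / ((d : ℝ) - 1) := by
    intro i
    have hnne : ((n i : ℝ)) ≠ 0 := by exact_mod_cast (hn i).ne'
    have hsum : (∑ b : Fin (n i), v ⟨i, b⟩) = (n i : ℝ) * c i := by
      rw [Finset.sum_congr rfl fun b _ => hvc ⟨i, b⟩]
      simp [mul_comm]
    rw [hs_def]
    simp only
    rw [hsum]
    field_simp
  refine ⟨c, hvc, fun i => ?_⟩
  have hT : ∑ j, s j = (∑ j, c j) / ((d : ℝ) - 1) := by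
    rw [Finset.sum_div]
    exact Finset.sum_congr rfl fun j _ => hsc j
  have h2 : μ * c i = (∑ j, s j) - s i := by
    rw [hc_def]; field_simp
  rw [hT, hsc i] at h2
  field_simp at h2
  linarith [h2]

/-- except for a single eigenvalue equal to `1` (the eigenspace
of `1` is one-dimensional), all eigenvalues of the random-walk matrix of the
complete multipartite graph are non-positive. -/
theorem multipartiteWalk_one_sided_expander
    (d : ℕ) (hd : 2 ≤ d) (n : Fin d → ℕ) (hn : ∀ i, 0 < n i) :
    Module.finrank ℝ
        (Module.End.eigenspace (Matrix.toLin' (multipartiteWalk d n)) 1) = 1 ∧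
    ∀ μ : ℝ, μ ≠ 1 →
      (∃ v : ((i : Fin d) × Fin (n i)) → ℝ, v ≠ 0 ∧
          (multipartiteWalk d n).mulVec v = μ • v) →
      μ ≤ 0 := by
  have hdpos : 0 < d := lt_of_lt_of_le two_pos hd
  have hd1 : (1 : ℝ) ≤ (d : ℝ) - 1 := by
    have : (2 : ℝ) ≤ (d : ℝ) := by exact_mod_cast hd
    linarith
  have hdne : ((d : ℝ) - 1) ≠ 0 := by linarith
  set u : ((i : Fin d) × Fin (n i)) → ℝ := fun _ => 1 with hu_def
  have hune : u ≠ 0 := by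
    intro h
    have := congrFun h ⟨⟨0, hdpos⟩, ⟨0, hn _⟩⟩
    simp [hu_def] at this
  constructor
  · have heq : Module.End.eigenspace (Matrix.toLin' (multipartiteWalk d n)) 1
        = Submodule.span ℝ {u} := by
      apply le_antisymm
      · intro v hv
        rw [Module.End.mem_eigenspace_iff, Matrix.toLin'_apply] at hv
        obtain ⟨c, hvc, hc⟩ := key_lemma d hd n hn 1 one_ne_zero v hv
        have hconst : ∀ i, c i = (∑ j, c j) / (d : ℝ) := by
          intro i
          have := hc i
          have hdne' : (d : ℝ) ≠ 0 := by positivity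
          field_simp
          linarith [this]
        have : v = ((∑ j, c j) / (d : ℝ)) • u := by
          funext x
          rw [hvc x, hconst x.1]
          simp [hu_def]
        rw [this]
        exact Submodule.smul_mem _ _ (Submodule.mem_span_singleton_self u)
      · rw [Submodule.span_le, Set.singleton_subset_iff]
        rw [SetLike.mem_coe, Module.End.mem_eigenspace_iff, Matrix.toLin'_apply]
        funext x
        rw [mulVec_formula]
        have : ∀ j : Fin d, (∑ b : Fin (n j), u ⟨j, b⟩) / (((d : ℝ) - 1) * n j)
            = 1 / ((d : ℝ) - 1) := by
          intro j
          have hnne : ((n j : ℝ)) ≠ 0 := by exact_mod_cast (hn j).ne'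
          simp only [hu_def, Finset.sum_const, Finset.card_univ, Fintype.card_fin,
            nsmul_eq_mul, mul_one]
          field_simp
        rw [Finset.sum_congr rfl fun j _ => by rw [this j]]
        rw [sum_ite_zero' (fun _ => 1 / ((d : ℝ) - 1)) x.1]
        simp only [Finset.sum_const, Finset.card_univ, Fintype.card_fin, nsmul_eq_mul]
        simp [hu_def]
        field_simp
    rw [heq]
    exact finrank_span_singleton hune
  · rintro μ hμ1 ⟨v, hv0, hv⟩
    by_contra hpos
    push_neg at hpos
    have hμne : μ ≠ 0 := ne_of_gt hpos
    obtain ⟨c, hvc, hc⟩ := key_lemma d hd n hn μ hμne v hv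
    have hK : 0 < μ * ((d : ℝ) - 1) + 1 := by nlinarith
    have hconst : ∀ i, c i = (∑ j, c j) / (μ * ((d : ℝ) - 1) + 1) := by
      intro i
      rw [eq_div_iff hK.ne']
      exact hc i
    set i0 : Fin d := ⟨0, hdpos⟩
    have hT : (∑ j, c j) = (d : ℝ) * c i0 := by
      rw [Finset.sum_congr rfl fun j _ => (hconst j).trans (hconst i0).symm]
      simp [mul_comm]
    have hc0 : c i0 = 0 := by
      have h1 := hc i0
      rw [hT] at h1
      have : c i0 * ((d : ℝ) - 1) * (μ - 1) = 0 := by ring_nf; ring_nf at h1; linarith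
      rcases mul_eq_zero.1 this with h | h
      · rcases mul_eq_zero.1 h with h' | h'
        · exact h'
        · exact absurd h' hdne
      · exact absurd (by linarith : μ = 1) hμ1
    apply hv0
    funext x
    rw [hvc x, hconst x.1, hT, hc0]
    simp
end

section
/- Let g : ∏_{i=1}^k [N_i] → [M]^k and 0 < α < 1. Consider the test: pick x uniform; for each i independently with probability α set y_i = x_i and put i into A, else pick y_i uniform; accept iff g(x)|_A = g(y)|_A. If g passes this test with parameter α with probability at least 1 − ε, then g passes the same test with parameter α² with probability at least 1 − 2ε. -/
open Finset

/-- The acceptance probability of the Dinur–Steurer two-query direct product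
test `𝒯(α)`: pick `x` uniform; independently for each coordinate `i`, with
probability `α` set `y i = x i` (putting `i` into `A`), else pick `y i`
uniform; accept iff `g(x)|_A = g(y)|_A`. -/
noncomputable def dpTestProb (k M : ℕ) (N : Fin k → ℕ)
    (g : ((i : Fin k) → Fin (N i + 1)) → Fin k → Fin (M + 1)) (a : ℝ) : ℝ :=
  (∑ x : (i : Fin k) → Fin (N i + 1), ∑ z : (i : Fin k) → Fin (N i + 1),
      ∑ c : Fin k → Bool,
        (∏ i : Fin k, if c i then a else 1 - a) *
          (if ∀ i : Fin k, c i = true →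
              g x i = g (fun i => if c i then x i else z i) i
            then 1 else 0))
    / ((Fintype.card ((i : Fin k) → Fin (N i + 1)) : ℝ) ^ 2)

namespace DPAux

variable {k M : ℕ} {N : Fin k → ℕ}

/-- weight of a coin vector -/
def DW (k : ℕ) (a : ℝ) (c : Fin k → Bool) : ℝ := ∏ i, if c i then a else 1 - a

def DMix (c : Fin k → Bool) (x z : (i : Fin k) → Fin (N i + 1)) :
    (i : Fin k) → Fin (N i + 1) := fun i => if c i then x i else z i

def DI (g : ((i : Fin k) → Fin (N i + 1)) → Fin k → Fin (M + 1))
    (u v : (i : Fin k) → Fin (N i + 1)) (d : Fin k → Bool) : ℝ :=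
  if ∀ i, d i = true → g u i = g v i then 1 else 0

lemma sum_pi_prod {β : Fin k → Type*} [∀ i, Fintype (β i)] (f : ∀ i, β i → ℝ) :
    ∑ p : (∀ i, β i), ∏ i, f i (p i) = ∏ i, ∑ b, f i b := by
  rw [Finset.prod_univ_sum]
  rw [Fintype.piFinset_univ]

lemma ind_forall (P : Fin k → Prop) [DecidablePred P] :
    (if ∀ i, P i then (1:ℝ) else 0) = ∏ i, if P i then 1 else 0 := by
  by_cases h : ∀ i, P i
  · rw [if_pos h, eq_comm]
    exact Finset.prod_eq_one fun i _ => if_pos (h i)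
  · rw [if_neg h, eq_comm]
    push_neg at h
    obtain ⟨i, hi⟩ := h
    exact Finset.prod_eq_zero (mem_univ i) (if_neg hi)

lemma sum_delta {β : Type*} [Fintype β] [DecidableEq β] (y : β) (h : β → ℝ) :
    ∑ u : β, (if y = u then (1:ℝ) else 0) * h u = h y := by
  simp [ite_mul]

lemma sum_DW (a : ℝ) : ∑ c : Fin k → Bool, DW k a c = 1 := by
  unfold DW
  have h : (∑ c : Fin k → Bool, ∏ i, if c i then a else 1 - a)
      = ∏ i : Fin k, ∑ b : Bool, if b then a else 1 - a :=
    sum_pi_prod (fun _ (b : Bool) => if b then a else 1 - a)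
  rw [h]
  apply Finset.prod_eq_one
  intro i _
  simp [Fintype.sum_bool]

lemma DI_nonneg (g) (u v : (i : Fin k) → Fin (N i + 1)) (d) :
    0 ≤ DI (M := M) g u v d := by
  unfold DI; split_ifs <;> norm_num

lemma DI_le_one (g) (u v : (i : Fin k) → Fin (N i + 1)) (d) :
    DI (M := M) g u v d ≤ 1 := by
  unfold DI; split_ifs <;> norm_num

lemma DW_nonneg {a : ℝ} (h0 : 0 ≤ a) (h1 : a ≤ 1) (c : Fin k → Bool) : 0 ≤ DW k a c :=
  Finset.prod_nonneg fun i _ => by split_ifs <;> linarith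

lemma DI_union (g : ((i : Fin k) → Fin (N i + 1)) → Fin k → Fin (M + 1))
    (x y y' : (i : Fin k) → Fin (N i + 1)) (c c' : Fin k → Bool) :
    DI g x y c + DI g x y' c' - 1 ≤ DI g y y' (fun i => c i && c' i) := by
  have himp : (∀ i, c i = true → g x i = g y i) → (∀ i, c' i = true → g x i = g y' i) →
      (∀ i, (c i && c' i) = true → g y i = g y' i) := by
    intro h1 h2 i hi
    rw [Bool.and_eq_true] at hi
    exact (h1 i hi.1).symm.trans (h2 i hi.2)
  unfold DI
  split_ifs with a b cth <;> first
    | (exact absurd (himp a b) cth)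
    | norm_num


/-- The coupling equivalence: for fixed coin vectors `c, c'`, rearranging the
triple `(x, z, z')` so that the first two outputs are `(y, w)` with
`y = mix c x z` and `mix c' x z' = mix (c && c') y w`. -/
def couplingEquiv (c c' : Fin k → Bool) :
    (((i : Fin k) → Fin (N i + 1)) × ((i : Fin k) → Fin (N i + 1)) × ((i : Fin k) → Fin (N i + 1))) ≃
    (((i : Fin k) → Fin (N i + 1)) × ((i : Fin k) → Fin (N i + 1)) × ((i : Fin k) → Fin (N i + 1))) where
  toFun p :=
    ⟨fun i => if c i then p.1 i else p.2.1 i,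
     fun i => if c' i then (if c i then p.2.1 i else p.1 i) else p.2.2 i,
     fun i => if c' i then p.2.2 i else (if c i then p.2.1 i else p.1 i)⟩
  invFun q :=
    ⟨fun i => if c i then q.1 i else (if c' i then q.2.1 i else q.2.2 i),
     fun i => if c i then (if c' i then q.2.1 i else q.2.2 i) else q.1 i,
     fun i => if c' i then q.2.2 i else q.2.1 i⟩
  left_inv := by
    rintro ⟨x, z, z'⟩
    refine Prod.ext ?_ (Prod.ext ?_ ?_) <;> funext i <;>
      cases hc : c i <;> cases hc' : c' i <;> simp [hc, hc']
  right_inv := by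
    rintro ⟨u, v, w⟩
    refine Prod.ext ?_ (Prod.ext ?_ ?_) <;> funext i <;>
      cases hc : c i <;> cases hc' : c' i <;> simp [hc, hc']

lemma couplingEquiv_snd (c c' : Fin k → Bool)
    (p : ((i : Fin k) → Fin (N i + 1)) × ((i : Fin k) → Fin (N i + 1)) × ((i : Fin k) → Fin (N i + 1))) :
    DMix c' p.1 p.2.2
      = DMix (fun i => c i && c' i) ((couplingEquiv (N := N) c c' p).1) ((couplingEquiv (N := N) c c' p).2.1) := by
  funext i
  simp only [DMix, couplingEquiv, Equiv.coe_fn_mk]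
  by_cases hc : c i = true <;> by_cases hc' : c' i = true <;> simp [hc, hc']

/-- Key counting/coupling identity. -/
lemma key_count (c c' : Fin k → Bool)
    (f : ((i : Fin k) → Fin (N i + 1)) → ((i : Fin k) → Fin (N i + 1)) → ℝ) :
    (∑ x : (i : Fin k) → Fin (N i + 1), ∑ z : (i : Fin k) → Fin (N i + 1),
        ∑ z' : (i : Fin k) → Fin (N i + 1), f (DMix c x z) (DMix c' x z'))
      = (Fintype.card ((i : Fin k) → Fin (N i + 1)) : ℝ) *
        ∑ x : (i : Fin k) → Fin (N i + 1), ∑ z : (i : Fin k) → Fin (N i + 1),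
          f x (DMix (fun i => c i && c' i) x z) := by
  have h1 : (∑ x : (i : Fin k) → Fin (N i + 1), ∑ z : (i : Fin k) → Fin (N i + 1),
        ∑ z' : (i : Fin k) → Fin (N i + 1), f (DMix c x z) (DMix c' x z'))
      = ∑ p : (((i : Fin k) → Fin (N i + 1)) × ((i : Fin k) → Fin (N i + 1)) × ((i : Fin k) → Fin (N i + 1))),
          f (DMix c p.1 p.2.1) (DMix c' p.1 p.2.2) := by
    rw [Fintype.sum_prod_type]
    refine Finset.sum_congr rfl fun x _ => ?_
    rw [Fintype.sum_prod_type]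
  have h2 : ∀ p, f (DMix c p.1 p.2.1) (DMix c' p.1 p.2.2)
      = f ((couplingEquiv (N := N) c c' p).1)
          (DMix (fun i => c i && c' i) ((couplingEquiv (N := N) c c' p).1)
            ((couplingEquiv (N := N) c c' p).2.1)) := by
    intro p
    rw [← couplingEquiv_snd]
    rfl
  rw [h1]
  rw [Finset.sum_congr rfl fun p _ => h2 p]
  rw [Equiv.sum_comp (couplingEquiv (N := N) c c')
    (fun q => f q.1 (DMix (fun i => c i && c' i) q.1 q.2.1))]
  rw [Fintype.sum_prod_type]
  rw [Finset.mul_sum]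
  refine Finset.sum_congr rfl fun x _ => ?_
  rw [Fintype.sum_prod_type, Finset.mul_sum]
  refine Finset.sum_congr rfl fun z _ => ?_
  simp [Finset.sum_const, card_univ, nsmul_eq_mul, mul_comm]

lemma bool_coeff (α : ℝ) (d : Fin k → Bool) :
    (∑ c : Fin k → Bool, ∑ c' : Fin k → Bool,
      DW k α c * DW k α c' * (if (fun i => c i && c' i) = d then (1:ℝ) else 0))
    = DW k (α ^ 2) d := by
  have hδ : ∀ c c' : Fin k → Bool, (if (fun i => c i && c' i) = d then (1:ℝ) else 0)
      = ∏ i, if (c i && c' i) = d i then (1:ℝ) else 0 := by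
    intro c c'
    simp only [funext_iff]
    exact ind_forall _
  have step1 : ∀ c : Fin k → Bool,
      (∑ c' : Fin k → Bool, DW k α c * DW k α c' * (if (fun i => c i && c' i) = d then (1:ℝ) else 0))
      = ∏ i, ∑ b' : Bool, ((if c i then α else 1 - α) * (if b' then α else 1 - α)
          * (if (c i && b') = d i then (1:ℝ) else 0)) := by
    intro c
    have e1 : ∀ c' : Fin k → Bool,
        DW k α c * DW k α c' * (if (fun i => c i && c' i) = d then (1:ℝ) else 0)
        = ∏ i, ((if c i then α else 1 - α) * (if c' i then α else 1 - α)
            * (if (c i && c' i) = d i then (1:ℝ) else 0)) := by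
      intro c'
      rw [hδ c c']
      unfold DW
      rw [← Finset.prod_mul_distrib, ← Finset.prod_mul_distrib]
    rw [Finset.sum_congr rfl fun c' _ => e1 c']
    exact sum_pi_prod (fun i (b' : Bool) => (if c i then α else 1 - α) * (if b' then α else 1 - α)
      * (if (c i && b') = d i then (1:ℝ) else 0))
  rw [Finset.sum_congr rfl fun c _ => step1 c]
  have step2 := sum_pi_prod (fun i (b : Bool) => ∑ b' : Bool, ((if b then α else 1 - α)
    * (if b' then α else 1 - α) * (if (b && b') = d i then (1:ℝ) else 0)))
  rw [step2]
  unfold DW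
  refine Finset.prod_congr rfl fun i _ => ?_
  cases hd : d i <;> simp [Fintype.sum_bool, hd] <;> ring

lemma bool_push (α : ℝ) (Q : (Fin k → Bool) → ℝ) :
    (∑ c : Fin k → Bool, ∑ c' : Fin k → Bool, DW k α c * DW k α c' * Q (fun i => c i && c' i))
    = ∑ d : Fin k → Bool, DW k (α ^ 2) d * Q d := by
  have e1 : ∀ c c' : Fin k → Bool, DW k α c * DW k α c' * Q (fun i => c i && c' i)
      = ∑ d : Fin k → Bool, (DW k α c * DW k α c'
          * (if (fun i => c i && c' i) = d then (1:ℝ) else 0)) * Q d := by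
    intro c c'
    have := sum_delta (fun i => c i && c' i) Q
    rw [eq_comm]
    calc ∑ d : Fin k → Bool, (DW k α c * DW k α c'
          * (if (fun i => c i && c' i) = d then (1:ℝ) else 0)) * Q d
        = DW k α c * DW k α c' * ∑ d : Fin k → Bool,
            (if (fun i => c i && c' i) = d then (1:ℝ) else 0) * Q d := by
          rw [Finset.mul_sum]
          exact Finset.sum_congr rfl fun d _ => by ring
      _ = DW k α c * DW k α c' * Q (fun i => c i && c' i) := by rw [this]
  rw [Finset.sum_congr rfl fun c _ => Finset.sum_congr rfl fun c' _ => e1 c c']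
  rw [Finset.sum_congr rfl fun c _ => Finset.sum_comm]
  rw [Finset.sum_comm]
  refine Finset.sum_congr rfl fun d _ => ?_
  rw [Finset.sum_congr rfl fun c _ => (Finset.sum_mul _ _ _).symm, ← Finset.sum_mul, bool_coeff]

/-- the inner acceptance probability for a fixed coin vector -/
def DQ (g : ((i : Fin k) → Fin (N i + 1)) → Fin k → Fin (M + 1)) (d : Fin k → Bool) : ℝ :=
  ∑ x : (i : Fin k) → Fin (N i + 1), ∑ z : (i : Fin k) → Fin (N i + 1),
    DI g x (DMix d x z) d

/-- unnormalized acceptance probability -/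
def DU (g : ((i : Fin k) → Fin (N i + 1)) → Fin k → Fin (M + 1)) (a : ℝ) : ℝ :=
  ∑ c : Fin k → Bool, DW k a c * DQ g c

lemma sum_DW_mul (a : ℝ) (r : ℝ) : ∑ c : Fin k → Bool, DW k a c * r = r := by
  rw [← Finset.sum_mul, sum_DW, one_mul]

lemma dpTestProb_eq (g : ((i : Fin k) → Fin (N i + 1)) → Fin k → Fin (M + 1)) (a : ℝ) :
    dpTestProb k M N g a
      = DU g a / ((Fintype.card ((i : Fin k) → Fin (N i + 1)) : ℝ)) ^ 2 := by
  have h0 : dpTestProb k M N g a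
      = (∑ x : (i : Fin k) → Fin (N i + 1), ∑ z : (i : Fin k) → Fin (N i + 1),
          ∑ c : Fin k → Bool, DW k a c * DI g x (DMix c x z) c)
        / ((Fintype.card ((i : Fin k) → Fin (N i + 1)) : ℝ)) ^ 2 := rfl
  rw [h0]
  congr 1
  rw [Finset.sum_congr rfl fun x _ => Finset.sum_comm]
  rw [Finset.sum_comm]
  unfold DU DQ
  refine Finset.sum_congr rfl fun c _ => ?_
  rw [Finset.mul_sum]
  exact Finset.sum_congr rfl fun x _ => (Finset.mul_sum _ _ _).symm

end DPAux

/-- if `g` passes the test `𝒯(α)` with probability at least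
`1 - ε`, then it passes `𝒯(α²)` with probability at least `1 - 2ε`. -/
theorem dpTest_parameter_squaring (k M : ℕ) (N : Fin k → ℕ)
    (g : ((i : Fin k) → Fin (N i + 1)) → Fin k → Fin (M + 1))
    (α ε : ℝ) (h0 : 0 < α) (h1 : α < 1)
    (h : dpTestProb k M N g α ≥ 1 - ε) :
    dpTestProb k M N g (α ^ 2) ≥ 1 - 2 * ε := by
  open DPAux in
  have hα0 : (0:ℝ) ≤ α := le_of_lt h0
  have hα1 : α ≤ 1 := le_of_lt h1
  set n : ℝ := (Fintype.card ((i : Fin k) → Fin (N i + 1)) : ℝ) with hn_def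
  have hn : 0 < n := by
    rw [hn_def]
    exact_mod_cast Fintype.card_pos
  -- notation for the coupled sum
  set S : ℝ := ∑ c : Fin k → Bool, ∑ c' : Fin k → Bool, DW k α c * DW k α c' *
      (∑ x : (i : Fin k) → Fin (N i + 1), ∑ z : (i : Fin k) → Fin (N i + 1),
        ∑ z' : (i : Fin k) → Fin (N i + 1),
          DI g (DMix c x z) (DMix c' x z') (fun i => c i && c' i)) with hS_def
  -- (1) S equals n times the α² acceptance sum
  have hS : S = n * DU g (α ^ 2) := by
    rw [hS_def]
    have e : ∀ c c' : Fin k → Bool, DW k α c * DW k α c' *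
        (∑ x : (i : Fin k) → Fin (N i + 1), ∑ z : (i : Fin k) → Fin (N i + 1),
          ∑ z' : (i : Fin k) → Fin (N i + 1),
            DI g (DMix c x z) (DMix c' x z') (fun i => c i && c' i))
        = n * (DW k α c * DW k α c' * DQ g (fun i => c i && c' i)) := by
      intro c c'
      rw [key_count c c' (fun u v => DI g u v (fun i => c i && c' i))]
      unfold DQ
      rw [← hn_def]
      ring
    rw [Finset.sum_congr rfl fun c _ => Finset.sum_congr rfl fun c' _ => e c c']
    rw [Finset.sum_congr rfl fun c _ => (Finset.mul_sum _ _ _).symm, ← Finset.mul_sum]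
    rw [bool_push α (DQ g)]
    rfl
  -- (2) inner triple sums of the two marginal tests
  have hA : ∀ c c' : Fin k → Bool,
      (∑ x : (i : Fin k) → Fin (N i + 1), ∑ z : (i : Fin k) → Fin (N i + 1),
        ∑ z' : (i : Fin k) → Fin (N i + 1), DI g x (DMix c x z) c) = n * DQ g c := by
    intro c c'
    unfold DQ
    rw [Finset.mul_sum]
    refine Finset.sum_congr rfl fun x _ => ?_
    rw [Finset.mul_sum]
    refine Finset.sum_congr rfl fun z _ => ?_
    rw [Finset.sum_const, card_univ, nsmul_eq_mul, ← hn_def]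
  have hB : ∀ c c' : Fin k → Bool,
      (∑ x : (i : Fin k) → Fin (N i + 1), ∑ z : (i : Fin k) → Fin (N i + 1),
        ∑ z' : (i : Fin k) → Fin (N i + 1), DI g x (DMix c' x z') c') = n * DQ g c' := by
    intro c c'
    unfold DQ
    rw [Finset.mul_sum]
    refine Finset.sum_congr rfl fun x _ => ?_
    rw [Finset.sum_const, card_univ, nsmul_eq_mul, ← hn_def]
  have hC : (∑ _x : (i : Fin k) → Fin (N i + 1), ∑ _z : (i : Fin k) → Fin (N i + 1),
        ∑ _z' : (i : Fin k) → Fin (N i + 1), (1:ℝ)) = n ^ 3 := by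
    simp only [Finset.sum_const, card_univ, nsmul_eq_mul, mul_one, ← hn_def]
    ring
  -- (3) lower bound on the triple sum via the union bound for failures
  have htrip : ∀ c c' : Fin k → Bool,
      n * DQ g c + n * DQ g c' - n ^ 3 ≤
        ∑ x : (i : Fin k) → Fin (N i + 1), ∑ z : (i : Fin k) → Fin (N i + 1),
          ∑ z' : (i : Fin k) → Fin (N i + 1),
            DI g (DMix c x z) (DMix c' x z') (fun i => c i && c' i) := by
    intro c c'
    have step : (∑ x : (i : Fin k) → Fin (N i + 1), ∑ z : (i : Fin k) → Fin (N i + 1),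
        ∑ z' : (i : Fin k) → Fin (N i + 1),
          (DI g x (DMix c x z) c + DI g x (DMix c' x z') c' - 1)) ≤
        ∑ x : (i : Fin k) → Fin (N i + 1), ∑ z : (i : Fin k) → Fin (N i + 1),
        ∑ z' : (i : Fin k) → Fin (N i + 1),
          DI g (DMix c x z) (DMix c' x z') (fun i => c i && c' i) :=
      Finset.sum_le_sum fun x _ => Finset.sum_le_sum fun z _ => Finset.sum_le_sum fun z' _ =>
        DI_union g x (DMix c x z) (DMix c' x z') c c'
    refine le_trans (le_of_eq ?_) step
    simp only [Finset.sum_add_distrib, Finset.sum_sub_distrib]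
    rw [hA c c', hB c c', hC]
  -- (4) lower bound on S
  have hLS : (∑ c : Fin k → Bool, ∑ c' : Fin k → Bool, DW k α c * DW k α c' *
      (n * DQ g c + n * DQ g c' - n ^ 3)) ≤ S := by
    rw [hS_def]
    refine Finset.sum_le_sum fun c _ => Finset.sum_le_sum fun c' _ => ?_
    exact mul_le_mul_of_nonneg_left (htrip c c')
      (mul_nonneg (DW_nonneg hα0 hα1 c) (DW_nonneg hα0 hα1 c'))
  -- (5) evaluate the lower bound
  have hL : (∑ c : Fin k → Bool, ∑ c' : Fin k → Bool, DW k α c * DW k α c' *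
      (n * DQ g c + n * DQ g c' - n ^ 3)) = 2 * (n * DU g α) - n ^ 3 := by
    have e : ∀ c c' : Fin k → Bool, DW k α c * DW k α c' *
        (n * DQ g c + n * DQ g c' - n ^ 3)
        = DW k α c' * (n * (DW k α c * DQ g c))
          + DW k α c * (DW k α c' * (n * DQ g c'))
          - DW k α c * (DW k α c' * n ^ 3) := fun c c' => by ring
    rw [Finset.sum_congr rfl fun c _ => Finset.sum_congr rfl fun c' _ => e c c']
    simp only [Finset.sum_add_distrib, Finset.sum_sub_distrib]
    have t1 : (∑ c : Fin k → Bool, ∑ c' : Fin k → Bool,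
        DW k α c' * (n * (DW k α c * DQ g c))) = n * DU g α := by
      rw [Finset.sum_congr rfl fun c _ => sum_DW_mul α (n * (DW k α c * DQ g c))]
      rw [← Finset.mul_sum]
      rfl
    have t2 : (∑ c : Fin k → Bool, ∑ c' : Fin k → Bool,
        DW k α c * (DW k α c' * (n * DQ g c'))) = n * DU g α := by
      have inner : (∑ c' : Fin k → Bool, DW k α c' * (n * DQ g c')) = n * DU g α := by
        unfold DU
        rw [Finset.mul_sum]
        exact Finset.sum_congr rfl fun c' _ => by ring
      rw [Finset.sum_congr rfl fun c _ => by rw [← Finset.mul_sum, inner]]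
      rw [← Finset.sum_mul, sum_DW, one_mul]
    have t3 : (∑ c : Fin k → Bool, ∑ c' : Fin k → Bool,
        DW k α c * (DW k α c' * n ^ 3)) = n ^ 3 := by
      rw [Finset.sum_congr rfl fun c _ => by rw [← Finset.mul_sum, sum_DW_mul α (n^3)]]
      rw [sum_DW_mul]
    rw [t1, t2, t3]
    ring
  -- (6) put everything together
  have hUα : DU g α ≥ (1 - ε) * n ^ 2 := by
    have := h
    rw [dpTestProb_eq g α, ← hn_def, ge_iff_le, le_div_iff₀ (by positivity)] at this
    linarith
  have hU2 : DU g (α ^ 2) ≥ (1 - 2 * ε) * n ^ 2 := by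
    have hmain : n * ((1 - 2 * ε) * n ^ 2) ≤ n * DU g (α ^ 2) := by
      have hre : 2 * (n * DU g α) - n ^ 3 ≥ 2 * (n * ((1 - ε) * n ^ 2)) - n ^ 3 := by
        nlinarith [hUα, hn]
      have : n * ((1 - 2 * ε) * n ^ 2) = 2 * (n * ((1 - ε) * n ^ 2)) - n ^ 3 := by ring
      rw [this]
      calc 2 * (n * ((1 - ε) * n ^ 2)) - n ^ 3 ≤ 2 * (n * DU g α) - n ^ 3 := hre
        _ ≤ S := hL.symm.trans_le hLS
        _ = n * DU g (α ^ 2) := hS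
    exact le_of_mul_le_mul_left hmain hn
  rw [dpTestProb_eq g (α ^ 2), ← hn_def, ge_iff_le, le_div_iff₀ (by positivity)]
  linarith
end
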